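/- Let $a,b,c$ be positive integers and $m,n,m',n'$ arbitrary integers, and let $P$ be the $(a+1)\times(a+1)$ matrix over $\mathbb{Q}$ with entries $P_{i,j} = \binom{b+c}{c+j-i}$ for $1\le i,j\le a$; $P_{i,a+1} = \binom{n}{m-i}$ for $1\le i\le a$; $P_{a+1,j} = \binom{n'}{j-m'}$ for $1\le j\le a$; $P_{a+1,a+1} = \binom{n+n'-b-c}{m-m'-c}$. Then $\det(P) = \left(\prod_{i=1}^{a}\prod_{j=1}^{b}\prod_{k=1}^{c}\frac{i+j+k-1}{i+j+k-2}\right)\cdot\left(\binom{n+n'-b-c}{m-m'-c} - \sum_{v=1}^{a} B_{b,c,n',m'}(v)\cdot D_{b,c,n,m}(v)\right)$. -/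

import Mathlib

/-- The binomial coefficient for integer arguments, over ℚ:
`n!/((n-k)! k!)` if `0 ≤ k ≤ n`, and `0` otherwise. -/
noncomputable def ibinom (n k : ℤ) : ℚ :=
  if 0 ≤ k ∧ k ≤ n then
    (Nat.factorial n.toNat : ℚ) / (Nat.factorial (n - k).toNat * Nat.factorial k.toNat)
  else 0

/-- The entry `A(b,c,i,j)` of the lower-triangular factor. -/
noncomputable def Afun (b c i j : ℕ) : ℚ :=
  if j ≤ i ∧ i ≤ c + j then
    (Nat.factorial c * Nat.factorial (i - 1) * Nat.factorial (b + j - 1) : ℚ) /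
      (Nat.factorial (j - 1) * Nat.factorial (b + i - 1) * Nat.factorial (i - j) *
        Nat.factorial (c + j - i))
  else 0

/-- The entry `C(b,c,i,j)` of the upper-triangular factor. -/
noncomputable def Cfun (b c i j : ℕ) : ℚ :=
  if i ≤ j ∧ j ≤ b + i then
    (Nat.factorial b * Nat.factorial (j - 1) * Nat.factorial (b + c + i - 1) : ℚ) /
      (Nat.factorial (b + i - 1) * Nat.factorial (c + j - 1) * Nat.factorial (j - i) *
        Nat.factorial (b + i - j))
  else 0

/-- The entry `D(i)` (last column of the upper-triangular factor), in the
integer parameters `n, m`. -/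
noncomputable def Dfun (b c : ℕ) (n m : ℤ) (i : ℕ) : ℚ :=
  ∑ v ∈ Finset.Icc 1 i, (-1 : ℚ) ^ (i - v) *
    ((Nat.factorial (i - 1) * Nat.factorial (b + v - 1) * Nat.factorial (c + i - v - 1) : ℚ) /
      (Nat.factorial (c - 1) * Nat.factorial (v - 1) * Nat.factorial (b + i - 1) *
        Nat.factorial (i - v))) * ibinom n (m - v)

/-- The entry `B(j)` (last row of the lower-triangular factor), in the
integer parameters `n', m'`. -/
noncomputable def Bfun (b c : ℕ) (n' m' : ℤ) (j : ℕ) : ℚ :=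
  ∑ v ∈ Finset.Icc 1 j, (-1 : ℚ) ^ (j - v) *
    ((Nat.factorial (b + j - 1) * Nat.factorial (c + v - 1) * Nat.factorial (b + j - v - 1) : ℚ) /
      (Nat.factorial (b - 1) * Nat.factorial (v - 1) * Nat.factorial (j - v) *
        Nat.factorial (b + c + j - 1))) * ibinom n' (v - m')

/-- MacMahon's product formula for the number of rhombus tilings of the
semi-regular hexagon with side lengths `a, b, c`. -/
noncomputable def macmahon (a b c : ℕ) : ℚ :=
  ∏ i ∈ Finset.Icc 1 a, ∏ j ∈ Finset.Icc 1 b, ∏ k ∈ Finset.Icc 1 c,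
    (((i : ℚ) + j + k - 1) / ((i : ℚ) + j + k - 2))

open Finset Matrix
open scoped Nat

/-!
Split off the last row and column. The top-left block `Q = (binom(b+c, c+j-i))` factors as
`Q = A C` with `A` (entries `Afun`) lower unitriangular and `C` (entries `Cfun`) upper
triangular, and the last column and row are `A D` and `B C`, where `D` and `B` are the vectors
of `Dfun` and `Bfun`. Hence the matrix is `[A 0; B 1] * [C D; 0 s - B D]`, whose determinant is
`det C * (s - B D)`, and `det C = ∏ C(i,i)` is MacMahon's product.

`A C = Q` is proved by induction on the column index: the summands `A(i,v) C(v,j)` satisfy the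
first-order recurrence of the binomial coefficients in `j` up to a telescoping WZ certificate,
which comes from contiguous relations of `Afun` and `Cfun`. The identities for the border say
that `Dfun` and `Bfun` are built from `A⁻¹` and `C⁻¹`; both inverse relations reduce to
`∑ₜ (-1)ᵗ binom(c, N-t) binom(c-1+t, t) = 0` for `N > 0`, the coefficient of `xᴺ` in
`(1+x)^c (1+x)^(-c) = 1`.
-/

theorem Nat.cast_choose_succ_mul {R : Type*} [CommRing R] (n k : ℕ) :
    (n.choose (k + 1) : R) * (k + 1) = n.choose k * (n - k) := by
  rcases le_or_gt k n with h | h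
  · have := congrArg (Nat.cast : ℕ → R) (Nat.choose_succ_right_eq n k)
    push_cast [Nat.cast_sub h] at this
    exact this
  · rw [Nat.choose_eq_zero_of_lt h, Nat.choose_eq_zero_of_lt (by omega)]
    simp

theorem sum_range_neg_one_pow_mul_choose_mul_choose (c : ℕ) {N : ℕ} (hN : 0 < N) :
    ∑ t ∈ range (N + 1), (-1 : ℚ) ^ t * ((c + 1).choose (N - t) * (c + t).choose t) = 0 := by
  have h := Ring.add_choose_eq N (Commute.all (-((c + 1 : ℕ) : ℤ)) ((c + 1 : ℕ) : ℤ))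
  rw [neg_add_cancel, Ring.choose_zero_pos ℤ hN, Finset.Nat.sum_antidiagonal_eq_sum_range_succ
    (fun t s => Ring.choose (-((c + 1 : ℕ) : ℤ)) t * Ring.choose ((c + 1 : ℕ) : ℤ) s)] at h
  have h' := congrArg (Int.cast : ℤ → ℚ) h
  rw [Int.cast_zero, Int.cast_sum] at h'
  rw [h']
  refine sum_congr rfl fun t _ => ?_
  rw [Ring.choose_neg, Ring.choose_natCast,
    show ((c + 1 : ℕ) : ℤ) + t - 1 = ((c + t : ℕ) : ℤ) by push_cast; ring,
    Ring.choose_natCast, Int.negOnePow_def]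
  simp only [zpow_natCast, Units.smul_def, Units.val_pow_eq_pow_val, Units.val_neg, Units.val_one,
    Int.zsmul_eq_mul, Int.cast_mul, Int.cast_pow, Int.cast_neg, Int.cast_one, Int.cast_natCast]
  ring

theorem sum_Icc_neg_one_pow_mul_choose_mul_choose (γ : ℕ) {u i : ℕ} (hui : u < i) :
    ∑ k ∈ Icc u i,
      (-1 : ℚ) ^ (k - u) * ((γ + 1).choose (i - k) * (γ + (k - u)).choose (k - u)) = 0 := by
  obtain ⟨N, rfl⟩ : ∃ N, i = u + N := ⟨i - u, by omega⟩
  rw [← Ico_add_one_right_eq_Icc, sum_Ico_eq_sum_range, show u + N + 1 - u = N + 1 by omega,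
    ← sum_range_neg_one_pow_mul_choose_mul_choose γ (by omega : 0 < N)]
  refine sum_congr rfl fun t _ => ?_
  rw [Nat.add_sub_cancel_left, Nat.add_sub_add_left]

theorem ibinom_natCast (p k : ℕ) : ibinom p k = p.choose k := by
  rw [ibinom]
  split_ifs with h
  · rw [Nat.cast_choose ℚ (by omega : k ≤ p)]
    simp only [Int.toNat_natCast, show ((p : ℤ) - k).toNat = p - k by omega]
    ring
  · rw [Nat.choose_eq_zero_of_lt (by omega), Nat.cast_zero]

theorem ibinom_of_neg {n k : ℤ} (hk : k < 0) : ibinom n k = 0 := if_neg (by omega)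

theorem Fin.prod_univ_add_one_eq_prod_Icc {M : Type*} [CommMonoid M] (f : ℕ → M) (a : ℕ) :
    ∏ i : Fin a, f (i + 1) = ∏ k ∈ Icc 1 a, f k := by
  rw [Fin.prod_univ_eq_prod_range (fun i => f (i + 1)), range_eq_Ico, prod_Ico_add' f 0 a 1,
    zero_add, Ico_add_one_right_eq_Icc]

theorem Fin.sum_univ_add_one_eq_sum_Icc {M : Type*} [AddCommMonoid M] (f : ℕ → M) (a : ℕ) :
    ∑ i : Fin a, f (i + 1) = ∑ k ∈ Icc 1 a, f k := by
  rw [Fin.sum_univ_eq_sum_range (fun i => f (i + 1)), range_eq_Ico, sum_Ico_add' f 0 a 1,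
    zero_add, Ico_add_one_right_eq_Icc]

namespace Matrix

variable {m n R : Type*} [Fintype m] [Fintype n] [DecidableEq m] [DecidableEq n] [CommRing R]

theorem det_fromBlocks_mul_mul (A C : Matrix m m R) (D : Matrix m n R) (B : Matrix n m R)
    (S : Matrix n n R) :
    (fromBlocks (A * C) (A * D) (B * C) S).det = A.det * C.det * (S - B * D).det := by
  have h : fromBlocks (A * C) (A * D) (B * C) S
      = fromBlocks A 0 B 1 * fromBlocks C D 0 (S - B * D) := by
    simp [fromBlocks_multiply]
  rw [h, det_mul, det_fromBlocks_zero₁₂, det_fromBlocks_zero₂₁, det_one]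
  ring

theorem det_eq_of_bordered {a : ℕ} (M : Matrix (Fin (a + 1)) (Fin (a + 1)) R)
    (A C : Matrix (Fin a) (Fin a) R) (D : Matrix (Fin a) (Fin 1) R) (B : Matrix (Fin 1) (Fin a) R)
    (hAC : ∀ i j, M i.castSucc j.castSucc = (A * C) i j)
    (hAD : ∀ i, M i.castSucc (Fin.last a) = (A * D) i 0)
    (hBC : ∀ j, M (Fin.last a) j.castSucc = (B * C) 0 j) :
    M.det = A.det * C.det * (M (Fin.last a) (Fin.last a) - (B * D) 0 0) := by
  have h : reindex finSumFinEquiv.symm finSumFinEquiv.symm M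
      = fromBlocks (A * C) (A * D) (B * C) (of fun _ _ => M (Fin.last a) (Fin.last a)) := by
    ext (i | i) (j | j) <;>
      simp only [reindex_apply, submatrix_apply, Equiv.symm_symm, finSumFinEquiv_apply_left,
        finSumFinEquiv_apply_right, fromBlocks_apply₁₁, fromBlocks_apply₁₂,
        fromBlocks_apply₂₁, fromBlocks_apply₂₂, of_apply, Fin.fin_one_eq_zero]
    exacts [hAC i j, hAD i, hBC j, rfl]
  rw [← det_reindex_self finSumFinEquiv.symm M, h, det_fromBlocks_mul_mul,
    det_unique (n := Fin 1)]
  rfl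

end Matrix

section ClosedForms

variable {b c i j : ℕ}

theorem Afun_eq (hji : j ≤ i) :
    Afun b c i j = c.choose (i - j) * ((i - 1)! * (b + j - 1)!) / ((j - 1)! * (b + i - 1)!) := by
  rw [Afun]
  split_ifs with h
  · rw [Nat.cast_choose ℚ (show i - j ≤ c by omega), show c - (i - j) = c + j - i by omega]
    field_simp
  · rw [Nat.choose_eq_zero_of_lt (by omega)]
    simp

theorem Afun_of_lt (h : i < j) : Afun b c i j = 0 := if_neg (by omega)

theorem Afun_of_add_lt (h : c + j < i) : Afun b c i j = 0 := if_neg (by omega)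

theorem Afun_self : Afun b c i i = 1 := by
  rw [Afun_eq le_rfl]
  simp [Nat.factorial_ne_zero]

theorem Cfun_eq (hij : i ≤ j) :
    Cfun b c i j
      = b.choose (j - i) * ((j - 1)! * (b + c + i - 1)!) / ((b + i - 1)! * (c + j - 1)!) := by
  rw [Cfun]
  split_ifs with h
  · rw [Nat.cast_choose ℚ (show j - i ≤ b by omega), show b - (j - i) = b + i - j by omega]
    field_simp
  · rw [Nat.choose_eq_zero_of_lt (by omega)]
    simp

theorem Cfun_of_lt (h : j < i) : Cfun b c i j = 0 := if_neg (by omega)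

end ClosedForms

section Contiguous

variable {b c i j v : ℕ}

theorem cast_factorial_eq_mul_factorial_sub_one {n : ℕ} (hn : 1 ≤ n) :
    (n ! : ℚ) = n * (n - 1)! := by
  exact_mod_cast (Nat.mul_factorial_pred (by omega)).symm

theorem Afun_contiguous_right (hv : 1 ≤ v) :
    ((b : ℚ) + v) * ((i : ℚ) - v) * Afun b c i v
      = v * ((c : ℚ) + v + 1 - i) * Afun b c i (v + 1) := by
  rcases le_or_gt i v with h | h
  · rw [Afun_of_lt (by omega : i < v + 1)]
    obtain rfl | h := h.eq_or_lt
    · ring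
    · rw [Afun_of_lt h]; ring
  · obtain ⟨d, rfl⟩ : ∃ d, i = v + 1 + d := ⟨i - (v + 1), by omega⟩
    rw [Afun_eq (by omega), Afun_eq (by omega), show v + 1 + d - v = d + 1 by omega,
      show v + 1 + d - (v + 1) = d by omega, show b + (v + 1) - 1 = b + v by omega,
      Nat.add_sub_cancel,
      cast_factorial_eq_mul_factorial_sub_one (n := b + v) (by omega),
      cast_factorial_eq_mul_factorial_sub_one hv]
    have := Nat.cast_choose_succ_mul (R := ℚ) c d
    push_cast
    field_simp
    linear_combination this

theorem Cfun_contiguous_right (hv : 1 ≤ v) (hvj : v ≤ j) :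
    ((c : ℚ) + j) * ((j : ℚ) + 1 - v) * Cfun b c v (j + 1)
      = j * ((b : ℚ) + v - j) * Cfun b c v j := by
  rw [Cfun_eq (by omega), Cfun_eq hvj, show j + 1 - v = j - v + 1 by omega, Nat.add_sub_cancel,
    show c + (j + 1) - 1 = c + j by omega,
    cast_factorial_eq_mul_factorial_sub_one (n := c + j) (by omega),
    cast_factorial_eq_mul_factorial_sub_one (n := j) (by omega)]
  have := Nat.cast_choose_succ_mul (R := ℚ) b (j - v)
  have hcj : (c : ℚ) + j ≠ 0 := by norm_cast; omega
  push_cast [Nat.cast_sub hvj] at this ⊢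
  field_simp
  linear_combination (j : ℚ) * this

theorem Cfun_contiguous_left (hv : 1 ≤ v) (hvj : v + 1 ≤ j) :
    ((b : ℚ) + c + v) * ((j : ℚ) - v) * Cfun b c v j
      = ((b : ℚ) + v) * ((b : ℚ) + v + 1 - j) * Cfun b c (v + 1) j := by
  rw [Cfun_eq (by omega), Cfun_eq hvj, show j - v = j - (v + 1) + 1 by omega,
    show b + (v + 1) - 1 = b + v by omega, show b + c + (v + 1) - 1 = b + c + v by omega,
    cast_factorial_eq_mul_factorial_sub_one (n := b + v) (by omega),
    cast_factorial_eq_mul_factorial_sub_one (n := b + c + v) (by omega)]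
  have := Nat.cast_choose_succ_mul (R := ℚ) b (j - (v + 1))
  push_cast [Nat.cast_sub hvj] at this ⊢
  field_simp
  linear_combination this

theorem Cfun_contiguous_self (hj : 1 ≤ j) :
    ((b : ℚ) + j) * ((c : ℚ) + j) * Cfun b c (j + 1) (j + 1)
      = j * ((b : ℚ) + c + j) * Cfun b c j j := by
  rw [Cfun_eq le_rfl, Cfun_eq le_rfl, Nat.add_sub_cancel, show b + (j + 1) - 1 = b + j by omega,
    show c + (j + 1) - 1 = c + j by omega, show b + c + (j + 1) - 1 = b + c + j by omega,
    cast_factorial_eq_mul_factorial_sub_one (n := b + j) (by omega),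
    cast_factorial_eq_mul_factorial_sub_one (n := c + j) (by omega),
    cast_factorial_eq_mul_factorial_sub_one (n := b + c + j) (by omega),
    cast_factorial_eq_mul_factorial_sub_one hj]
  push_cast
  field_simp

end Contiguous

section FactorProduct

variable {b c i j v : ℕ}

noncomputable def wzCertificate (b c i j v : ℕ) : ℚ :=
  -(((b : ℚ) + c + v) * ((i : ℚ) - v) * (Afun b c i v * Cfun b c v j)) /
    (((c : ℚ) + j + 1 - i) * ((c : ℚ) + j))

-- `wzCertificate b c i j (v - 1)` rewritten, via the contiguous relations, in terms of the summand
-- at `v`; in this form it vanishes at `v = 1` instead of involving the junk value `Afun b c i 0`.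
noncomputable def wzCertificatePred (b c i j v : ℕ) : ℚ :=
  -(((v : ℚ) - 1) * ((c : ℚ) + v - i) * ((b : ℚ) + v - j) * (Afun b c i v * Cfun b c v j) /
      ((j : ℚ) + 1 - v)) / (((c : ℚ) + j + 1 - i) * ((c : ℚ) + j))

theorem wzCertificate_sub_wzCertificatePred (hv : 1 ≤ v) (hvj : v ≤ j) (hij : i ≤ c + j) :
    wzCertificate b c i j v - wzCertificatePred b c i j v
      = Afun b c i v * Cfun b c v (j + 1)
        - ((b : ℚ) + i - j) / ((c : ℚ) + j + 1 - i) * (Afun b c i v * Cfun b c v j) := by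
  have hC := Cfun_contiguous_right (b := b) (c := c) hv hvj
  have h₁ : (c : ℚ) + j ≠ 0 := by norm_cast; omega
  have h₂ : (j : ℚ) + 1 - v ≠ 0 := by
    rw [sub_ne_zero]; norm_cast; omega
  have h₃ : (c : ℚ) + j + 1 - i ≠ 0 := by
    rw [sub_ne_zero]; norm_cast; omega
  rw [mul_comm, ← eq_div_iff (mul_ne_zero h₁ h₂)] at hC
  rw [wzCertificate, wzCertificatePred, hC]
  field_simp
  ring

theorem wzCertificate_eq_wzCertificatePred_succ (hv : 1 ≤ v) (hvj : v + 1 ≤ j) :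
    wzCertificate b c i j v = wzCertificatePred b c i j (v + 1) := by
  have hA := Afun_contiguous_right (b := b) (c := c) (i := i) hv
  have hC := Cfun_contiguous_left (b := b) (c := c) hv hvj
  have h₁ : (j : ℚ) - v ≠ 0 := by
    rw [sub_ne_zero]; norm_cast; omega
  have h₂ : (b : ℚ) + v ≠ 0 := by norm_cast; omega
  have key : ((b : ℚ) + c + v) * ((i : ℚ) - v) * ((j : ℚ) - v) * (Afun b c i v * Cfun b c v j)
      = v * ((c : ℚ) + v + 1 - i) * ((b : ℚ) + v + 1 - j)
        * (Afun b c i (v + 1) * Cfun b c (v + 1) j) := by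
    apply mul_left_cancel₀ h₂
    linear_combination ((b : ℚ) + c + v) * ((j : ℚ) - v) * Cfun b c v j * hA
      + v * ((c : ℚ) + v + 1 - i) * Afun b c i (v + 1) * hC
  rw [wzCertificate, wzCertificatePred]
  congr 2
  push_cast
  rw [show (j : ℚ) + 1 - (v + 1) = j - v by ring, eq_div_iff h₁]
  linear_combination key

theorem wzCertificatePred_one : wzCertificatePred b c i j 1 = 0 := by
  simp [wzCertificatePred]

theorem Afun_mul_Cfun_succ_self (hj : 1 ≤ j) (hij : i ≤ c + j) :
    Afun b c i (j + 1) * Cfun b c (j + 1) (j + 1) = -wzCertificate b c i j j := by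
  have hA := Afun_contiguous_right (b := b) (c := c) (i := i) hj
  have hC := Cfun_contiguous_self (b := b) (c := c) hj
  have h₁ : (j : ℚ) * ((b : ℚ) + j) ≠ 0 := by norm_cast; positivity
  have key :
      ((c : ℚ) + j + 1 - i) * ((c : ℚ) + j) * (Afun b c i (j + 1) * Cfun b c (j + 1) (j + 1))
      = ((b : ℚ) + c + j) * ((i : ℚ) - j) * (Afun b c i j * Cfun b c j j) := by
    apply mul_left_cancel₀ h₁
    linear_combination j * ((c : ℚ) + j + 1 - i) * Afun b c i (j + 1) * hC
      - j * ((b : ℚ) + c + j) * Cfun b c j j * hA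
  have h₂ : (c : ℚ) + j ≠ 0 := by norm_cast; omega
  have h₃ : (c : ℚ) + j + 1 - i ≠ 0 := by
    rw [sub_ne_zero]; norm_cast; omega
  rw [wzCertificate]
  field_simp
  linear_combination key

theorem sum_Icc_sub_eq_wzCertificate {k : ℕ} (hk : 1 ≤ k) (hkj : k ≤ j) (hij : i ≤ c + j) :
    ∑ v ∈ Icc 1 k, (Afun b c i v * Cfun b c v (j + 1)
        - ((b : ℚ) + i - j) / ((c : ℚ) + j + 1 - i) * (Afun b c i v * Cfun b c v j))
      = wzCertificate b c i j k := by
  induction k, hk using Nat.le_induction with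
  | base =>
    rw [Icc_self, sum_singleton, ← wzCertificate_sub_wzCertificatePred le_rfl (by omega) hij,
      wzCertificatePred_one, sub_zero]
  | succ k hk ih =>
    rw [sum_Icc_succ_top (by omega), ih (by omega),
      ← wzCertificate_sub_wzCertificatePred (by omega) hkj hij,
      wzCertificate_eq_wzCertificatePred_succ hk hkj]
    ring

theorem ibinom_succ_mul (hij : i ≤ c + j) :
    ((c : ℚ) + j + 1 - i) * ibinom ((b : ℤ) + c) ((c : ℤ) + j + 1 - i)
      = ((b : ℚ) + i - j) * ibinom ((b : ℤ) + c) ((c : ℤ) + j - i) := by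
  obtain ⟨k, hk⟩ : ∃ k, c + j = i + k := ⟨c + j - i, by omega⟩
  have hk' : ((c : ℚ) + j) = i + k := by exact_mod_cast hk
  rw [show (b : ℤ) + c = ((b + c : ℕ) : ℤ) by push_cast; ring,
    show (c : ℤ) + j + 1 - i = ((k + 1 : ℕ) : ℤ) by omega,
    show (c : ℤ) + j - i = (k : ℤ) by omega, ibinom_natCast, ibinom_natCast,
    show ((b : ℚ) + i - j) = ((b + c : ℕ) : ℚ) - k by push_cast; linarith,
    show ((c : ℚ) + j + 1 - i) = ((k : ℕ) : ℚ) + 1 by linarith,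
    mul_comm, Nat.cast_choose_succ_mul, mul_comm]

theorem Afun_mul_Cfun_one (hi : 1 ≤ i) :
    Afun b c i 1 * Cfun b c 1 1 = ibinom ((b : ℤ) + c) ((c : ℤ) + 1 - i) := by
  rcases le_or_gt i (c + 1) with h | h
  · obtain ⟨d, rfl⟩ : ∃ d, i = d + 1 := ⟨i - 1, by omega⟩
    obtain ⟨e, rfl⟩ : ∃ e, c = d + e := ⟨c - d, by omega⟩
    rw [Afun_eq (by omega), Cfun_eq le_rfl,
      show (b : ℤ) + (d + e : ℕ) = ((b + d + e : ℕ) : ℤ) by push_cast; ring,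
      show ((d + e : ℕ) : ℤ) + 1 - (d + 1 : ℕ) = (e : ℤ) by push_cast; ring, ibinom_natCast]
    simp only [Nat.add_sub_cancel, Nat.sub_self, show b + (d + 1) - 1 = b + d by omega,
      show b + (d + e) + 1 - 1 = b + d + e by omega, Nat.choose_zero_right, Nat.factorial_zero]
    rw [Nat.cast_choose ℚ (by omega : e ≤ b + d + e),
      Nat.cast_choose ℚ (by omega : d ≤ d + e), show b + d + e - e = b + d by omega,
      Nat.add_sub_cancel_left]
    push_cast
    field_simp
  · rw [Afun_of_add_lt (by omega), ibinom_of_neg (by omega), zero_mul]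

theorem Afun_add_succ_mul_Cfun_succ_self :
    Afun b c (c + j + 1) (j + 1) * Cfun b c (j + 1) (j + 1) = 1 := by
  rw [Afun_eq (by omega), Cfun_eq le_rfl]
  simp only [Nat.add_sub_cancel, Nat.sub_self, show c + j + 1 - (j + 1) = c by omega,
    show b + (j + 1) - 1 = b + j by omega, show c + (j + 1) - 1 = c + j by omega,
    show b + (c + j + 1) - 1 = b + c + j by omega, show b + c + (j + 1) - 1 = b + c + j by omega,
    Nat.choose_self, Nat.choose_zero_right]
  push_cast
  field_simp

theorem sum_Afun_mul_Cfun (hi : 1 ≤ i) (hj : 1 ≤ j) :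
    ∑ v ∈ Icc 1 j, Afun b c i v * Cfun b c v j
      = ibinom ((b : ℤ) + c) ((c : ℤ) + j - i) := by
  induction j, hj using Nat.le_induction with
  | base => rw [Icc_self, sum_singleton, Afun_mul_Cfun_one hi, Nat.cast_one]
  | succ j hj ih =>
    rw [sum_Icc_succ_top (by omega), show (c : ℤ) + (j + 1 : ℕ) - i = (c : ℤ) + j + 1 - i by
      push_cast; ring]
    rcases le_or_gt i (c + j) with hij | hij
    · have h := sum_Icc_sub_eq_wzCertificate (b := b) hj le_rfl hij
      rw [sum_sub_distrib, ← mul_sum, ih] at h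
      have hrec := ibinom_succ_mul (b := b) hij
      have hne : (c : ℚ) + j + 1 - i ≠ 0 := by
        rw [sub_ne_zero]; norm_cast; omega
      have hstep :
          ((b : ℚ) + i - j) / ((c : ℚ) + j + 1 - i) * ibinom ((b : ℤ) + c) ((c : ℤ) + j - i)
          = ibinom ((b : ℤ) + c) ((c : ℤ) + j + 1 - i) := by
        rw [div_mul_eq_mul_div, ← hrec]
        field_simp
      rw [Afun_mul_Cfun_succ_self hj hij, ← hstep]
      linear_combination h
    · obtain rfl | hlt : i = c + j + 1 ∨ c + j + 1 < i := by omega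
      · rw [sum_eq_zero fun v hv => by rw [Afun_of_add_lt (by simp at hv; omega), zero_mul],
          zero_add, Afun_add_succ_mul_Cfun_succ_self,
          show (c : ℤ) + j + 1 - (c + j + 1 : ℕ) = ((0 : ℕ) : ℤ) by push_cast; ring,
          show (b : ℤ) + c = ((b + c : ℕ) : ℤ) by push_cast; ring, ibinom_natCast]
        simp
      · rw [sum_eq_zero fun v hv => by rw [Afun_of_add_lt (by simp at hv; omega), zero_mul],
          Afun_of_add_lt (by omega), zero_mul, add_zero, ibinom_of_neg (by omega)]

end FactorProduct

section Inverses

variable {b c i j u v : ℕ}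

noncomputable def lowerInvCoeff (b c i v : ℕ) : ℚ :=
  if v ≤ i then
    (-1 : ℚ) ^ (i - v) * (((i - 1)! * (b + v - 1)! * (c + i - v - 1)! : ℚ) /
      ((c - 1)! * (v - 1)! * (b + i - 1)! * (i - v)!))
  else 0

noncomputable def upperInvCoeff (b c v j : ℕ) : ℚ :=
  if v ≤ j then
    (-1 : ℚ) ^ (j - v) * (((b + j - 1)! * (c + v - 1)! * (b + j - v - 1)! : ℚ) /
      ((b - 1)! * (v - 1)! * (j - v)! * (b + c + j - 1)!))
  else 0

theorem Dfun_eq_sum_lowerInvCoeff (b c : ℕ) (n m : ℤ) (i : ℕ) :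
    Dfun b c n m i = ∑ v ∈ Icc 1 i, lowerInvCoeff b c i v * ibinom n (m - v) :=
  sum_congr rfl fun v hv => by rw [lowerInvCoeff, if_pos (mem_Icc.mp hv).2]

theorem Bfun_eq_sum_upperInvCoeff (b c : ℕ) (n' m' : ℤ) (j : ℕ) :
    Bfun b c n' m' j = ∑ v ∈ Icc 1 j, upperInvCoeff b c v j * ibinom n' (v - m') :=
  sum_congr rfl fun v hv => by rw [upperInvCoeff, if_pos (mem_Icc.mp hv).2]

theorem lowerInvCoeff_eq (hc : 1 ≤ c) (hvi : v ≤ i) :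
    lowerInvCoeff b c i v = (-1 : ℚ) ^ (i - v) * (c - 1 + (i - v)).choose (i - v) *
      ((i - 1)! * (b + v - 1)!) / ((v - 1)! * (b + i - 1)!) := by
  rw [lowerInvCoeff, if_pos hvi, Nat.cast_choose ℚ (by omega : i - v ≤ c - 1 + (i - v)),
    show c - 1 + (i - v) - (i - v) = c - 1 by omega, show c + i - v - 1 = c - 1 + (i - v) by omega]
  field_simp

theorem upperInvCoeff_eq (hb : 1 ≤ b) (hvj : v ≤ j) :
    upperInvCoeff b c v j = (-1 : ℚ) ^ (j - v) * (b - 1 + (j - v)).choose (j - v) *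
      ((b + j - 1)! * (c + v - 1)!) / ((v - 1)! * (b + c + j - 1)!) := by
  rw [upperInvCoeff, if_pos hvj, Nat.cast_choose ℚ (by omega : j - v ≤ b - 1 + (j - v)),
    show b - 1 + (j - v) - (j - v) = b - 1 by omega, show b + j - v - 1 = b - 1 + (j - v) by omega]
  field_simp

theorem lowerInvCoeff_of_lt (h : i < v) : lowerInvCoeff b c i v = 0 := if_neg (by omega)

theorem upperInvCoeff_of_lt (h : j < v) : upperInvCoeff b c v j = 0 := if_neg (by omega)

theorem sum_Afun_mul_lowerInvCoeff (hc : 1 ≤ c) :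
    ∑ k ∈ Icc u i, Afun b c i k * lowerInvCoeff b c k u = if u = i then 1 else 0 := by
  obtain ⟨γ, rfl⟩ : ∃ γ, c = γ + 1 := ⟨c - 1, by omega⟩
  rcases lt_trichotomy u i with hui | rfl | hiu
  · rw [if_neg hui.ne, ← zero_mul (((i - 1)! * (b + u - 1)! : ℚ) / ((u - 1)! * (b + i - 1)!)),
      ← sum_Icc_neg_one_pow_mul_choose_mul_choose γ hui, sum_mul]
    refine sum_congr rfl fun k hk => ?_
    obtain ⟨huk, hki⟩ := mem_Icc.mp hk
    rw [Afun_eq hki, lowerInvCoeff_eq hc huk, Nat.add_sub_cancel]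
    field_simp
  · rw [Icc_self, sum_singleton, if_pos rfl, Afun_eq le_rfl, lowerInvCoeff_eq hc le_rfl]
    simp only [Nat.sub_self, pow_zero, Nat.choose_zero_right, Nat.cast_one, one_mul]
    field_simp
  · rw [Icc_eq_empty_of_lt hiu, sum_empty, if_neg hiu.ne']

theorem sum_upperInvCoeff_mul_Cfun (hb : 1 ≤ b) :
    ∑ k ∈ Icc u j, upperInvCoeff b c u k * Cfun b c k j = if u = j then 1 else 0 := by
  obtain ⟨β, rfl⟩ : ∃ β, b = β + 1 := ⟨b - 1, by omega⟩
  rcases lt_trichotomy u j with huj | rfl | hju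
  · rw [if_neg huj.ne, ← zero_mul (((c + u - 1)! * (j - 1)! : ℚ) / ((u - 1)! * (c + j - 1)!)),
      ← sum_Icc_neg_one_pow_mul_choose_mul_choose β huj, sum_mul]
    refine sum_congr rfl fun k hk => ?_
    obtain ⟨huk, hkj⟩ := mem_Icc.mp hk
    rw [Cfun_eq hkj, upperInvCoeff_eq hb huk, Nat.add_sub_cancel]
    field_simp
  · rw [Icc_self, sum_singleton, if_pos rfl, Cfun_eq le_rfl, upperInvCoeff_eq hb le_rfl]
    simp only [Nat.sub_self, pow_zero, Nat.choose_zero_right, Nat.cast_one, one_mul]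
    field_simp
  · rw [Icc_eq_empty_of_lt hju, sum_empty, if_neg hju.ne']

end Inverses

section MacMahon

variable {b c : ℕ}

theorem prod_Icc_div_telescope {x : ℚ} (hx : 0 < x) (c : ℕ) :
    ∏ k ∈ Icc 1 c, (x + k) / (x + k - 1) = (x + c) / x := by
  induction c with
  | zero => simp [hx.ne']
  | succ c ih =>
    have : x + c ≠ 0 := by positivity
    rw [prod_Icc_succ_top (by omega), ih,
      show x + ((c + 1 : ℕ) : ℚ) - 1 = x + c by push_cast; ring]
    field_simp

theorem Cfun_succ_self_eq (b c w : ℕ) :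
    Cfun b c (w + 1) (w + 1) = (w ! * (b + c + w)! : ℚ) / ((b + w)! * (c + w)!) := by
  rw [Cfun_eq le_rfl]
  simp only [Nat.sub_self, Nat.choose_zero_right, Nat.add_sub_cancel, Nat.cast_one, one_mul,
    ← add_assoc]

theorem prod_prod_eq_Cfun_self (i : ℕ) (hi : 1 ≤ i) :
    ∏ j ∈ Icc 1 b, ∏ k ∈ Icc 1 c, (((i : ℚ) + j + k - 1) / ((i : ℚ) + j + k - 2))
      = Cfun b c i i := by
  obtain ⟨w, rfl⟩ : ∃ w, i = w + 1 := ⟨i - 1, by omega⟩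
  induction b with
  | zero =>
    rw [Icc_eq_empty (by omega), prod_empty, Cfun_succ_self_eq]
    simp only [zero_add]
    field_simp
  | succ b ih =>
    have hterm : ∀ k : ℕ,
        ((w + 1 : ℕ) + (b + 1 : ℕ) + k - 1 : ℚ) / ((w + 1 : ℕ) + (b + 1 : ℕ) + k - 2)
          = ((w : ℚ) + b + 1 + k) / ((w : ℚ) + b + 1 + k - 1) := fun k => by push_cast; ring_nf
    rw [prod_Icc_succ_top (by omega), ih, prod_congr rfl fun k _ => hterm k,
      prod_Icc_div_telescope (by positivity), Cfun_succ_self_eq, Cfun_succ_self_eq,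
      show b + 1 + c + w = b + c + w + 1 by ring, show b + 1 + w = b + w + 1 by ring,
      Nat.factorial_succ, Nat.factorial_succ]
    push_cast
    field_simp
    ring

end MacMahon

section Factorization

variable (a b c : ℕ)

noncomputable def lowerFactor : Matrix (Fin a) (Fin a) ℚ := of fun i j => Afun b c (i + 1) (j + 1)

noncomputable def upperFactor : Matrix (Fin a) (Fin a) ℚ := of fun i j => Cfun b c (i + 1) (j + 1)

noncomputable def lowerFactorInv : Matrix (Fin a) (Fin a) ℚ :=
  of fun i j => lowerInvCoeff b c (i + 1) (j + 1)

noncomputable def upperFactorInv : Matrix (Fin a) (Fin a) ℚ :=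
  of fun i j => upperInvCoeff b c (i + 1) (j + 1)

variable {a b c}

theorem lowerFactor_mul_upperFactor_apply (i j : Fin a) :
    (lowerFactor a b c * upperFactor a b c) i j
      = ibinom ((b : ℤ) + c) ((c : ℤ) + ((j : ℕ) + 1) - ((i : ℕ) + 1)) := by
  simp only [mul_apply, lowerFactor, upperFactor, of_apply]
  rw [Fin.sum_univ_add_one_eq_sum_Icc (fun v => Afun b c (i + 1) v * Cfun b c v (j + 1)),
    ← sum_subset (Icc_subset_Icc_right j.isLt) fun v hv hv' => by
      rw [Cfun_of_lt (by simp at hv hv'; omega), mul_zero],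
    sum_Afun_mul_Cfun (by omega) (by omega)]
  push_cast
  rfl

theorem lowerFactor_mul_lowerFactorInv (hc : 1 ≤ c) :
    lowerFactor a b c * lowerFactorInv a b c = 1 := by
  ext i u
  simp only [mul_apply, one_apply, lowerFactor, lowerFactorInv, of_apply]
  rw [Fin.sum_univ_add_one_eq_sum_Icc (fun k => Afun b c (i + 1) k * lowerInvCoeff b c k (u + 1)),
    ← sum_subset (s₁ := Icc ((u : ℕ) + 1) (i + 1)) (Icc_subset_Icc (by omega) i.isLt)
      fun k _ hk => ?_, sum_Afun_mul_lowerInvCoeff hc]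
  · simp [Fin.ext_iff, eq_comm]
  · rw [mem_Icc, not_and_or, not_le, not_le] at hk
    rcases hk with hk | hk
    · rw [lowerInvCoeff_of_lt hk, mul_zero]
    · rw [Afun_of_lt hk, zero_mul]

theorem upperFactorInv_mul_upperFactor (hb : 1 ≤ b) :
    upperFactorInv a b c * upperFactor a b c = 1 := by
  ext u j
  simp only [mul_apply, one_apply, upperFactor, upperFactorInv, of_apply]
  rw [Fin.sum_univ_add_one_eq_sum_Icc (fun k => upperInvCoeff b c (u + 1) k * Cfun b c k (j + 1)),
    ← sum_subset (s₁ := Icc ((u : ℕ) + 1) (j + 1)) (Icc_subset_Icc (by omega) j.isLt)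
      fun k _ hk => ?_, sum_upperInvCoeff_mul_Cfun hb]
  · simp [Fin.ext_iff]
  · rw [mem_Icc, not_and_or, not_le, not_le] at hk
    rcases hk with hk | hk
    · rw [upperInvCoeff_of_lt hk, zero_mul]
    · rw [Cfun_of_lt hk, mul_zero]

theorem lowerFactorInv_mul_apply (n m : ℤ) (i : Fin a) :
    (lowerFactorInv a b c * of fun (k : Fin a) (_ : Fin 1) => ibinom n (m - ((k : ℕ) + 1))) i 0
      = Dfun b c n m (i + 1) := by
  simp only [mul_apply, lowerFactorInv, of_apply]
  rw [Dfun_eq_sum_lowerInvCoeff, sum_subset (Icc_subset_Icc_right i.isLt) fun k hk hk' => by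
      rw [lowerInvCoeff_of_lt (by simp at hk hk'; omega), zero_mul],
    ← Fin.sum_univ_add_one_eq_sum_Icc]
  push_cast
  rfl

theorem mul_upperFactorInv_apply (n' m' : ℤ) (j : Fin a) :
    ((of fun (_ : Fin 1) (k : Fin a) => ibinom n' ((((k : ℕ) : ℤ) + 1) - m'))
      * upperFactorInv a b c) 0 j
      = Bfun b c n' m' (j + 1) := by
  simp only [mul_apply, upperFactorInv, of_apply]
  rw [Bfun_eq_sum_upperInvCoeff, sum_subset (Icc_subset_Icc_right j.isLt) fun k hk hk' => by
      rw [upperInvCoeff_of_lt (by simp at hk hk'; omega), zero_mul],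
    ← Fin.sum_univ_add_one_eq_sum_Icc]
  push_cast
  simp only [mul_comm]

theorem det_lowerFactor : (lowerFactor a b c).det = 1 := by
  rw [det_of_isLowerTriangular (lowerFactor a b c) fun i j (hij : i < j) =>
    Afun_of_lt (by simpa using hij)]
  exact prod_eq_one fun i _ => Afun_self

theorem det_upperFactor : (upperFactor a b c).det = macmahon a b c := by
  rw [det_of_isUpperTriangular (M := upperFactor a b c) fun i j (hij : j < i) =>
    Cfun_of_lt (by simpa using hij), macmahon]
  simp only [upperFactor, of_apply]
  rw [Fin.prod_univ_add_one_eq_prod_Icc (fun i => Cfun b c i i)]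
  exact prod_congr rfl fun i hi => (prod_prod_eq_Cfun_self i (mem_Icc.mp hi).1).symm

end Factorization

theorem statement_6_general (a b c : ℕ) (hb : 0 < b) (hc : 0 < c) (m n m' n' : ℤ) :
    (Matrix.of fun i j : Fin (a + 1) =>
      if (i : ℕ) < a then
        if (j : ℕ) < a then ibinom ((b : ℤ) + c) ((c : ℤ) + ((j : ℕ) + 1) - ((i : ℕ) + 1))
        else ibinom n (m - ((i : ℕ) + 1))
      else
        if (j : ℕ) < a then ibinom n' ((((j : ℕ) : ℤ) + 1) - m')
        else ibinom (n + n' - b - c) (m - m' - c)).det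
    = macmahon a b c *
        (ibinom (n + n' - b - c) (m - m' - c)
          - ∑ v ∈ Finset.Icc 1 a, Bfun b c n' m' v * Dfun b c n m v) := by
  rw [det_eq_of_bordered _ (lowerFactor a b c) (upperFactor a b c)
    (lowerFactorInv a b c * of fun (k : Fin a) (_ : Fin 1) => ibinom n (m - ((k : ℕ) + 1)))
    ((of fun (_ : Fin 1) (k : Fin a) => ibinom n' ((((k : ℕ) : ℤ) + 1) - m'))
      * upperFactorInv a b c)
    (fun i j => ?_) (fun i => ?_) (fun j => ?_), det_lowerFactor, det_upperFactor, mul_apply]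
  · simp only [mul_upperFactorInv_apply, lowerFactorInv_mul_apply, of_apply, Fin.val_last,
      lt_irrefl, if_false, one_mul]
    rw [Fin.sum_univ_add_one_eq_sum_Icc (fun v => Bfun b c n' m' v * Dfun b c n m v)]
  · simp [lowerFactor_mul_upperFactor_apply]
  · rw [← Matrix.mul_assoc, lowerFactor_mul_lowerFactorInv hc, Matrix.one_mul]
    simp
  · rw [Matrix.mul_assoc, upperFactorInv_mul_upperFactor hb, Matrix.mul_one]
    simp

/-- the determinant of the lattice path matrix equals MacMahon's
product times `binom(n+n'-b-c, m-m'-c) - ∑_{v=1}^{a} B(v) D(v)`. -/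
theorem statement_6 (a b c : ℕ) (ha : 0 < a) (hb : 0 < b) (hc : 0 < c) (m n m' n' : ℤ) :
    (Matrix.of fun i j : Fin (a + 1) =>
      if (i : ℕ) < a then
        if (j : ℕ) < a then ibinom ((b : ℤ) + c) ((c : ℤ) + ((j : ℕ) + 1) - ((i : ℕ) + 1))
        else ibinom n (m - ((i : ℕ) + 1))
      else
        if (j : ℕ) < a then ibinom n' ((((j : ℕ) : ℤ) + 1) - m')
        else ibinom (n + n' - b - c) (m - m' - c)).det
    = macmahon a b c *
        (ibinom (n + n' - b - c) (m - m' - c)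
          - ∑ v ∈ Finset.Icc 1 a, Bfun b c n' m' v * Dfun b c n m v) :=
  statement_6_general a b c hb hc m n m' n'
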